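/- arXiv:1604.03857 — 3 statements merged into one kernel-verified Lean document; each statement's English description precedes it below -/
import Mathlib

section
/- For every natural number d there is a bound r such that every finite cyclic subgroup of GL_d(ℤ_p) has order dividing r; equivalently, the orders of finite subgroups of GL_d(ℤ_p) are bounded. -/
open scoped BigOperators

section Aux

variable {p : ℕ} [Fact p.Prime]

private lemma padic_norm_sum_le {ι : Type*} (s : Finset ι) (f : ι → ℤ_[p]) {C : ℝ}
    (hC : 0 ≤ C) (h : ∀ i ∈ s, ‖f i‖ ≤ C) : ‖∑ i ∈ s, f i‖ ≤ C := by
  induction s using Finset.cons_induction with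
  | empty => simpa using hC
  | cons a s ha ih =>
    rw [Finset.sum_cons]
    exact (PadicInt.nonarchimedean _ _).trans
      (max_le (h a (Finset.mem_cons_self _ _))
        (ih fun i hi => h i (Finset.mem_cons.2 (Or.inr hi))))

private lemma padic_norm_sum_lt {ι : Type*} (s : Finset ι) (f : ι → ℤ_[p]) {C : ℝ}
    (hC : 0 < C) (h : ∀ i ∈ s, ‖f i‖ < C) : ‖∑ i ∈ s, f i‖ < C := by
  induction s using Finset.cons_induction with
  | empty => simpa using hC
  | cons a s ha ih =>
    rw [Finset.sum_cons]
    exact lt_of_le_of_lt (PadicInt.nonarchimedean _ _)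
      (max_lt (h a (Finset.mem_cons_self _ _))
        (ih fun i hi => h i (Finset.mem_cons.2 (Or.inr hi))))

private lemma padic_matrix_pow_entry_le {d : ℕ} (B : Matrix (Fin d) (Fin d) ℤ_[p]) {N : ℝ}
    (hN : 0 ≤ N) (hB : ∀ i j, ‖B i j‖ ≤ N) :
    ∀ n : ℕ, 1 ≤ n → ∀ i j, ‖(B ^ n) i j‖ ≤ N ^ n := by
  intro n
  induction n with
  | zero => omega
  | succ n ih =>
    intro _ i j
    by_cases h1 : n = 0
    · subst h1; simpa using hB i j
    · have hn : 1 ≤ n := Nat.one_le_iff_ne_zero.2 h1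
      rw [pow_succ, Matrix.mul_apply]
      refine padic_norm_sum_le _ _ (by positivity) fun k _ => ?_
      rw [norm_mul, pow_succ]
      exact mul_le_mul (ih hn i k) (hB k j) (norm_nonneg _) (pow_nonneg hN n)

/-- Key lemma: a matrix congruent to 1 mod p² with prime power order is 1. -/
private lemma padic_matrix_prime_order {d : ℕ} {ℓ : ℕ} (hℓ : ℓ.Prime)
    (A : Matrix (Fin d) (Fin d) ℤ_[p])
    (hA : ∀ i j, ‖(A - 1) i j‖ ≤ ((p : ℝ) ^ 2)⁻¹)
    (h : A ^ ℓ = 1) : A = 1 := by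
  have hp : p.Prime := Fact.out
  have hpR : (1 : ℝ) < (p : ℝ) := by exact_mod_cast hp.one_lt
  have hpR0 : (0 : ℝ) < (p : ℝ) := lt_trans one_pos hpR
  set B : Matrix (Fin d) (Fin d) ℤ_[p] := A - 1 with hBdef
  by_contra hA1
  have hB0 : B ≠ 0 := sub_ne_zero.2 hA1
  have hBex : ∃ i j, B i j ≠ 0 := by
    by_contra hcon
    push_neg at hcon
    exact hB0 (by ext i j; simpa using hcon i j)
  obtain ⟨i0, j0, hij0⟩ := hBex
  have hne : (Finset.univ : Finset (Fin d × Fin d)).Nonempty := ⟨(i0, j0), Finset.mem_univ _⟩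
  obtain ⟨ab, -, hmax⟩ := Finset.exists_max_image Finset.univ
    (fun x : Fin d × Fin d => ‖B x.1 x.2‖) hne
  set N : ℝ := ‖B ab.1 ab.2‖ with hNdef
  have hentry : ∀ i j, ‖B i j‖ ≤ N := fun i j => hmax (i, j) (Finset.mem_univ _)
  have hNpos : 0 < N := lt_of_lt_of_le (norm_pos_iff.2 hij0) (hentry i0 j0)
  have hNle : N ≤ ((p : ℝ) ^ 2)⁻¹ := hA ab.1 ab.2
  have hp2lt : ((p : ℝ) ^ 2)⁻¹ < (p : ℝ)⁻¹ := by
    rw [inv_lt_inv₀ (by positivity) hpR0]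
    calc (p : ℝ) = (p : ℝ) * 1 := (mul_one _).symm
    _ < (p : ℝ) * (p : ℝ) := by nlinarith
    _ = (p : ℝ) ^ 2 := (sq (p : ℝ)).symm
  have hN1 : N < 1 := lt_of_le_of_lt (hNle.trans hp2lt.le) (by
    rw [inv_lt_one_iff₀]; right; exact hpR)
  -- binomial expansion
  have e1 : (B + 1) ^ ℓ = 1 := by
    rw [hBdef, sub_add_cancel]; exact h
  rw [Commute.add_pow (Commute.one_right B)] at e1
  have e2 : ∑ i ∈ Finset.range (ℓ + 1), (ℓ.choose i) • B ^ i = 1 := by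
    rw [← e1]
    refine Finset.sum_congr rfl fun i _ => ?_
    rw [one_pow, mul_one, nsmul_eq_mul, (Nat.cast_commute (ℓ.choose i) (B ^ i)).eq]
  rw [Finset.sum_range_succ'] at e2
  simp only [Nat.choose_zero_right, pow_zero, one_smul] at e2
  have e3 : ∑ i ∈ Finset.range ℓ, (ℓ.choose (i + 1)) • B ^ (i + 1) = 0 := by
    have := congrArg (fun M => M - 1) e2
    simpa using this
  have hℓ1 : 1 ≤ ℓ := hℓ.one_lt.le.trans' (by norm_num)
  obtain ⟨m, hm⟩ : ∃ m, ℓ = m + 1 := ⟨ℓ - 1, by omega⟩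
  rw [hm, Finset.sum_range_succ'] at e3
  -- so ℓ • B = - ∑ ...
  have e4 : (ℓ : ℤ_[p]) * B ab.1 ab.2 =
      -∑ i ∈ Finset.range m, ((ℓ.choose (i + 1 + 1) : ℤ_[p]) * (B ^ (i + 1 + 1)) ab.1 ab.2) := by
    have := congrArg (fun M : Matrix (Fin d) (Fin d) ℤ_[p] => M ab.1 ab.2) e3
    simp only [Matrix.add_apply, Matrix.sum_apply, Matrix.smul_apply, Matrix.zero_apply,
      zero_add, pow_one, Nat.choose_one_right] at this
    simp only [nsmul_eq_mul] at this
    rw [← hm] at this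
    linear_combination this
  -- norms
  have hℓ0 : ((ℓ : ℤ_[p])) ≠ 0 := by
    exact_mod_cast Nat.cast_ne_zero.2 hℓ.ne_zero
  have hℓpos : 0 < ‖(ℓ : ℤ_[p])‖ := norm_pos_iff.2 hℓ0
  have key : ∀ i ∈ Finset.range m,
      ‖(ℓ.choose (i + 1 + 1) : ℤ_[p]) * (B ^ (i + 1 + 1)) ab.1 ab.2‖ < ‖(ℓ : ℤ_[p])‖ * N := by
    intro i hi
    have hj2 : 2 ≤ i + 1 + 1 := by omega
    have hjle : i + 1 + 1 ≤ ℓ := by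
      have := Finset.mem_range.1 hi; omega
    have hpow : ‖(B ^ (i + 1 + 1)) ab.1 ab.2‖ ≤ N ^ (i + 1 + 1) :=
      padic_matrix_pow_entry_le B hNpos.le hentry (i + 1 + 1) (by omega) ab.1 ab.2
    have hNsq : N ^ (i + 1 + 1) ≤ N ^ 2 :=
      pow_le_pow_of_le_one hNpos.le hN1.le hj2
    have hN2N : N ^ 2 < N := by nlinarith
    rw [norm_mul]
    by_cases hcase : ℓ = p
    · -- ℓ = p
      subst hcase
      rw [PadicInt.norm_p]
      by_cases htop : i + 1 + 1 = ℓ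
      · -- top term, choose = 1
        rw [htop, Nat.choose_self]
        simp only [Nat.cast_one, norm_one, one_mul]
        rw [htop] at hpow hNsq
        calc ‖(B ^ ℓ) ab.1 ab.2‖ ≤ N ^ ℓ := hpow
          _ ≤ N ^ 2 := hNsq
          _ = N * N := sq N
          _ ≤ ((ℓ : ℝ) ^ 2)⁻¹ * N := mul_le_mul_of_nonneg_right hNle hNpos.le
          _ < (ℓ : ℝ)⁻¹ * N := mul_lt_mul_of_pos_right hp2lt hNpos
      · -- p divides the binomial coefficient
        have hdvd : ℓ ∣ ℓ.choose (i + 1 + 1) :=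
          Nat.Prime.dvd_choose_self hℓ (by omega) (lt_of_le_of_ne hjle htop)
        obtain ⟨c, hc⟩ := hdvd
        have hnormc : ‖(ℓ.choose (i + 1 + 1) : ℤ_[ℓ])‖ ≤ (ℓ : ℝ)⁻¹ := by
          rw [hc]
          push_cast
          rw [norm_mul, PadicInt.norm_p]
          exact mul_le_of_le_one_right (inv_pos.2 hpR0).le (PadicInt.norm_le_one _)
        calc ‖(ℓ.choose (i + 1 + 1) : ℤ_[ℓ])‖ * ‖(B ^ (i + 1 + 1)) ab.1 ab.2‖
            ≤ (ℓ : ℝ)⁻¹ * N ^ 2 := by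
              have h1 : ‖(B ^ (i + 1 + 1)) ab.1 ab.2‖ ≤ N ^ 2 := hpow.trans hNsq
              exact mul_le_mul hnormc h1 (norm_nonneg _) (inv_pos.2 hpR0).le
          _ < (ℓ : ℝ)⁻¹ * N := mul_lt_mul_of_pos_left hN2N (inv_pos.2 hpR0)
    · -- ℓ ≠ p: ℓ is a unit in ℤ_p
      have hnotdvd : ¬ ((p : ℤ) ∣ (ℓ : ℤ)) := by
        rw [Int.natCast_dvd_natCast]
        intro hdvd
        exact hcase ((Nat.prime_dvd_prime_iff_eq hp hℓ).1 hdvd).symm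
      have hnorm1 : ‖(ℓ : ℤ_[p])‖ = 1 := by
        have hle := PadicInt.norm_le_one (ℓ : ℤ_[p])
        have hlt := (PadicInt.norm_int_lt_one_iff_dvd (ℓ : ℤ)).not.2 hnotdvd
        push_cast at hlt
        rcases lt_or_eq_of_le hle with h' | h'
        · exact absurd h' hlt
        · exact h'
      rw [hnorm1, one_mul]
      calc ‖(ℓ.choose (i + 1 + 1) : ℤ_[p])‖ * ‖(B ^ (i + 1 + 1)) ab.1 ab.2‖
          ≤ 1 * N ^ 2 := mul_le_mul (PadicInt.norm_le_one _) (hpow.trans hNsq)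
            (norm_nonneg _) zero_le_one
        _ = N ^ 2 := one_mul _
        _ < N := hN2N
  have hfinal : ‖(ℓ : ℤ_[p]) * B ab.1 ab.2‖ < ‖(ℓ : ℤ_[p])‖ * N := by
    rw [e4, norm_neg]
    exact padic_norm_sum_lt _ _ (by positivity) key
  rw [norm_mul] at hfinal
  exact absurd hfinal (by rw [hNdef]; exact lt_irrefl _)

end Aux

/-- The orders of finite subgroups of GL_d(ℤ_p) are bounded: there is r > 0 such
that every finite cyclic subgroup has order dividing r, and every finite subgroup
has order at most r. -/
theorem stmt11 (p : ℕ) [Fact p.Prime] (d : ℕ) :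
    ∃ r : ℕ, 0 < r ∧
      (∀ G : Subgroup (Matrix.GeneralLinearGroup (Fin d) ℤ_[p]),
        Finite G → IsCyclic G → Nat.card G ∣ r) ∧
      (∀ G : Subgroup (Matrix.GeneralLinearGroup (Fin d) ℤ_[p]),
        Finite G → Nat.card G ≤ r) := by
  classical
  have hp : p.Prime := Fact.out
  haveI : NeZero (p ^ 2) := ⟨pow_ne_zero 2 hp.ne_zero⟩
  set f : ℤ_[p] →+* ZMod (p ^ 2) := PadicInt.toZModPow 2 with hf
  let φ : Matrix.GeneralLinearGroup (Fin d) ℤ_[p] →*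
      Matrix.GeneralLinearGroup (Fin d) (ZMod (p ^ 2)) :=
    Units.map (RingHom.mapMatrix f).toMonoidHom
  -- key: φ is injective on elements of finite order
  have hker : ∀ A : Matrix.GeneralLinearGroup (Fin d) ℤ_[p],
      IsOfFinOrder A → φ A = 1 → A = 1 := by
    intro A hfin hφA
    by_contra hA1
    set n := orderOf A with hn
    have hn0 : n ≠ 0 := hfin.orderOf_pos.ne'
    have hn1 : n ≠ 1 := by
      intro h1
      exact hA1 (orderOf_eq_one_iff.1 h1)
    set ℓ := n.minFac with hℓdef
    have hℓ : ℓ.Prime := Nat.minFac_prime hn1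
    have hdvd : ℓ ∣ n := Nat.minFac_dvd n
    set C := A ^ (n / ℓ) with hC
    have hordC : orderOf C = ℓ := orderOf_pow_orderOf_div hn0 hdvd
    have hCpow : C ^ ℓ = 1 := by
      rw [← hordC]; exact pow_orderOf_eq_one C
    have hφC : φ C = 1 := by
      rw [hC, map_pow, hφA, one_pow]
    -- translate to matrices
    have hmatpow : (C : Matrix (Fin d) (Fin d) ℤ_[p]) ^ ℓ = 1 := by
      have := congrArg (Units.val) hCpow
      simpa using this
    have hentries : ∀ i j, ‖((C : Matrix (Fin d) (Fin d) ℤ_[p]) - 1) i j‖ ≤ ((p : ℝ) ^ 2)⁻¹ := by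
      intro i j
      have hmap : (C : Matrix (Fin d) (Fin d) ℤ_[p]).map ⇑f = 1 :=
        congrArg Units.val hφC
      have hentry : f ((C : Matrix (Fin d) (Fin d) ℤ_[p]) i j) = (1 : Matrix (Fin d) (Fin d) (ZMod (p ^ 2))) i j := by
        rw [← hmap]; rfl
      have hker' : f (((C : Matrix (Fin d) (Fin d) ℤ_[p]) - 1) i j) = 0 := by
        have h1 : ((1 : Matrix (Fin d) (Fin d) ℤ_[p]) i j) =
            (if i = j then (1 : ℤ_[p]) else 0) := Matrix.one_apply
        have h2 : ((1 : Matrix (Fin d) (Fin d) (ZMod (p^2))) i j) =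
            (if i = j then (1 : ZMod (p^2)) else 0) := Matrix.one_apply
        rw [Matrix.sub_apply, map_sub, hentry, h1, h2]
        split <;> simp
      have hmem : (((C : Matrix (Fin d) (Fin d) ℤ_[p]) - 1) i j) ∈
          Ideal.span {(p : ℤ_[p]) ^ 2} := by
        rw [← PadicInt.ker_toZModPow 2]
        exact hker'
      have := (PadicInt.norm_le_pow_iff_mem_span_pow
        (((C : Matrix (Fin d) (Fin d) ℤ_[p]) - 1) i j) 2).2 hmem
      calc ‖(((C : Matrix (Fin d) (Fin d) ℤ_[p]) - 1) i j)‖ ≤ (p : ℝ) ^ (-2 : ℤ) := this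
        _ = ((p : ℝ) ^ 2)⁻¹ := by
            rw [← zpow_natCast (p : ℝ) 2, ← zpow_neg]
            norm_num
    have hC1 : (C : Matrix (Fin d) (Fin d) ℤ_[p]) = 1 :=
      padic_matrix_prime_order hℓ _ hentries hmatpow
    have : C = 1 := Units.ext hC1
    rw [this, orderOf_one] at hordC
    exact hℓ.one_lt.ne' hordC.symm
  -- the target group is finite
  haveI : Finite (Matrix.GeneralLinearGroup (Fin d) (ZMod (p ^ 2))) := by
    infer_instance
  set r := Nat.card (Matrix.GeneralLinearGroup (Fin d) (ZMod (p ^ 2))) with hr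
  have hrpos : 0 < r := Nat.card_pos
  have hcard : ∀ G : Subgroup (Matrix.GeneralLinearGroup (Fin d) ℤ_[p]),
      Finite G → Nat.card G ∣ r := by
    intro G hG
    set ψ := φ.comp G.subtype with hψ
    have hinj : Function.Injective ψ := by
      rw [← MonoidHom.ker_eq_bot_iff]
      rw [Subgroup.eq_bot_iff_forall]
      intro x hx
      rw [MonoidHom.mem_ker] at hx
      haveI := hG
      have hfin : IsOfFinOrder (G.subtype x) :=
        G.subtype.isOfFinOrder (isOfFinOrder_of_finite x)
      have := hker (G.subtype x) hfin hx
      exact Subtype.ext (by simpa using this)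
    have h1 : Nat.card G = Nat.card (Set.range ψ) :=
      (Nat.card_range_of_injective hinj).symm
    have h2 : Nat.card (Set.range ψ) = Nat.card ψ.range := rfl
    rw [h1, h2]
    exact Subgroup.card_subgroup_dvd_card ψ.range
  refine ⟨r, hrpos, fun G hG _ => hcard G hG, fun G hG => Nat.le_of_dvd hrpos (hcard G hG)⟩
end

section
/- Let p > 2 be a prime and z ∈ {1, …, p−1}. Then the polynomial g = (1+t)^z + (1+t)^{p−z} + (1+t) + (1+t)^{p−1} − 4 in 𝔽_p[t] is nonzero. -/
open Polynomial

/-- For an odd prime p and 1 ≤ z ≤ p − 1, the polynomial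
(1+t)^z + (1+t)^{p−z} + (1+t) + (1+t)^{p−1} − 4 over 𝔽_p is nonzero. -/
theorem stmt14 (p : ℕ) [Fact p.Prime] (hp : 2 < p) (z : ℕ) (hz1 : 1 ≤ z)
    (hz2 : z ≤ p - 1) :
    ((1 + X : (ZMod p)[X]) ^ z + (1 + X) ^ (p - z) + (1 + X) + (1 + X) ^ (p - 1) - 4)
      ≠ 0 := by
  intro hg
  set h : (ZMod p)[X] := X ^ z + X ^ (p - z) + X + X ^ (p - 1) - 4 with hh
  have hcomp : h.comp (1 + X) =
      ((1 + X : (ZMod p)[X]) ^ z + (1 + X) ^ (p - z) + (1 + X) + (1 + X) ^ (p - 1) - 4) := by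
    simp [hh]
  have h0 : h = 0 := by
    have := congrArg (fun q => q.comp (X - 1)) (hcomp.trans hg)
    simpa [comp_assoc] using this
  have hc := congrArg (fun q => q.coeff (p - 1)) h0
  have h2 : 2 ≤ p - 1 := by omega
  have hz' : p - z ≤ p - 1 := by omega
  simp only [hh, coeff_add, coeff_sub, coeff_X_pow, coeff_zero] at hc
  have hc1 : (1 : ZMod p) ≠ 0 := one_ne_zero
  have hc2 : (2 : ZMod p) ≠ 0 := by
    have : ((2 : ℕ) : ZMod p) ≠ 0 := by
      rw [Ne, ZMod.natCast_eq_zero_iff]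
      exact fun hdvd => by
        have := Nat.le_of_dvd (by norm_num) hdvd
        omega
    simpa using this
  have hX : (X : (ZMod p)[X]).coeff (p - 1) = 0 := by
    rw [coeff_X, if_neg (by omega)]
  have h4 : ((4 : (ZMod p)[X])).coeff (p - 1) = 0 := by
    have h44 : (4 : (ZMod p)[X]) = C 4 := (map_ofNat C 4).symm
    rw [h44, coeff_C, if_neg (by omega)]
  rw [hX, h4] at hc
  split_ifs at hc with ha hb hb
  · omega
  all_goals norm_num at hc
  all_goals exact hc2 hc
end

section
/- Let λ ∈ ℤ_p and let f_λ = (1+t)^λ + (1+t)^{−λ} + (1+t) + (1+t)^{−1} − 4 ∈ 𝔽_p[[t]], where p is an odd prime and (1+t)^λ is defined by continuity (λ ↦ (1+t)^λ is the continuous extension of integer exponentiation). Then the t-adic order of f_λ is strictly less than p. -/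
/-
The coefficient of `t^(p-1)` in `(1+t)^λ` is `C(λ, p-1) mod p`, which by Lucas' theorem is `1`
when `λ ≡ -1 (mod p)` and `0` otherwise. Among `λ`, `-λ` and `-1` the last is `≡ -1`, and at most
one of `λ`, `-λ` is (as `p` is odd), while `1`, `t` and `4` do not reach degree `p - 1 ≥ 2`. So the
coefficient of `t^(p-1)` in `f_λ` is `1` or `2`, hence nonzero.
-/

open PowerSeries

/-- `(1+t)^λ` for a p-adic integer `λ`: the continuous extension of integer
exponentiation of the 1-unit `1+t` in 𝔽_p[[t]].  Its `n`-th coefficient is the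
binomial coefficient `C(λ, n)` reduced mod `p`, computed (via Lucas' theorem)
from the natural number `λ.appr (n+1)` congruent to `λ` modulo `p^(n+1)`. -/
noncomputable def onePlusTPow (p : ℕ) [Fact p.Prime] (lam : ℤ_[p]) :
    PowerSeries (ZMod p) :=
  PowerSeries.mk fun n => ((lam.appr (n + 1)).choose n : ZMod p)

theorem ZMod.natCast_choose_prime_sub_one (p m : ℕ) [Fact p.Prime] :
    (m.choose (p - 1) : ZMod p) = if (m : ZMod p) = -1 then 1 else 0 := by
  have hp := (Fact.out : p.Prime).pos
  have lucas : (m.choose (p - 1) : ZMod p) = ((m % p).choose (p - 1) : ZMod p) := by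
    rw [ZMod.natCast_eq_natCast_iff]
    simpa [Nat.mod_eq_of_lt, Nat.div_eq_of_lt, hp] using
      Choose.choose_modEq_choose_mod_mul_choose_div_nat (n := m) (k := p - 1) (p := p)
  have neg_one : ((p - 1 : ℕ) : ZMod p) = -1 := by
    rw [Nat.cast_sub hp, ZMod.natCast_self, Nat.cast_one, zero_sub]
  have hmod : (m : ZMod p) = -1 ↔ m % p = p - 1 := by
    rw [← neg_one, ZMod.natCast_eq_natCast_iff', Nat.mod_eq_of_lt (Nat.sub_lt hp one_pos)]
  rw [lucas]
  by_cases h : m % p = p - 1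
  · rw [if_pos (hmod.mpr h), h, Nat.choose_self, Nat.cast_one]
  · have : m % p < p - 1 := by have := Nat.mod_lt m hp; omega
    rw [if_neg (mt hmod.mp h), Nat.choose_eq_zero_of_lt this, Nat.cast_zero]

theorem PadicInt.natCast_appr_eq_toZMod {p : ℕ} [Fact p.Prime] (x : ℤ_[p]) {n : ℕ} (hn : n ≠ 0) :
    ((x.appr n : ℕ) : ZMod p) = toZMod x := by
  have hker : x - x.appr n ∈ RingHom.ker (toZMod : ℤ_[p] →+* ZMod p) := by
    rw [ker_toZMod, maximalIdeal_eq_span_p]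
    exact Ideal.span_singleton_le_span_singleton.mpr (dvd_pow_self _ hn) (appr_spec n x)
  rw [RingHom.mem_ker, map_sub, map_natCast, sub_eq_zero] at hker
  exact hker.symm

theorem coeff_prime_sub_one_onePlusTPow (p : ℕ) [Fact p.Prime] (x : ℤ_[p]) :
    coeff (p - 1) (onePlusTPow p x) = if PadicInt.toZMod x = -1 then 1 else 0 := by
  have hp := (Fact.out : p.Prime).pos
  rw [onePlusTPow, coeff_mk, Nat.sub_add_cancel hp, ZMod.natCast_choose_prime_sub_one,
    PadicInt.natCast_appr_eq_toZMod x hp.ne']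

theorem ite_eq_neg_one_add_ite_neg_eq_neg_one_add_one_ne_zero {R : Type*} [Ring R]
    [Nontrivial R] [DecidableEq R] (hR : ringChar R ≠ 2) (a : R) :
    ((if a = -1 then 1 else 0) + (if -a = -1 then 1 else 0) + 1 : R) ≠ 0 := by
  have two_ne : (2 : R) ≠ 0 := Ring.two_ne_zero hR
  by_cases ha : a = -1
  · have hna : -a ≠ -1 := by
      rw [ha, neg_neg]; exact (Ring.neg_one_ne_one_of_char_ne_two hR).symm
    rw [if_pos ha, if_neg hna, add_zero, one_add_one_eq_two]
    exact two_ne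
  · rw [if_neg ha, zero_add]
    split_ifs
    · rw [one_add_one_eq_two]; exact two_ne
    · rw [zero_add]; exact one_ne_zero

/-- For an odd prime p and λ ∈ ℤ_p, the t-adic order of
f_λ = (1+t)^λ + (1+t)^{−λ} + (1+t) + (1+t)^{−1} − 4 in 𝔽_p[[t]] is less than p. -/
theorem stmt17 (p : ℕ) [Fact p.Prime] (hp : 2 < p) (lam : ℤ_[p]) :
    (onePlusTPow p lam + onePlusTPow p (-lam) + (1 + X) + onePlusTPow p (-1)
        - 4 : PowerSeries (ZMod p)).order < (p : ℕ∞) := by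
  have hdeg : 1 < p - 1 := by omega
  have hcoeff : coeff (p - 1) (onePlusTPow p lam + onePlusTPow p (-lam) + (1 + X)
      + onePlusTPow p (-1) - 4 : PowerSeries (ZMod p)) ≠ 0 := by
    have h4 : (4 : PowerSeries (ZMod p)) = C (4 : ZMod p) := map_ofNat C 4 |>.symm
    simp only [map_sub, map_add, coeff_prime_sub_one_onePlusTPow, map_neg, map_one, if_true, h4,
      coeff_C, coeff_one, coeff_X, if_neg hdeg.ne', if_neg (show p - 1 ≠ 0 by omega), add_zero,
      sub_zero]
    refine ite_eq_neg_one_add_ite_neg_eq_neg_one_add_one_ne_zero ?_ _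
    rw [ZMod.ringChar_zmod_n]; exact hp.ne'
  calc _ ≤ ((p - 1 : ℕ) : ℕ∞) := order_le _ hcoeff
    _ < p := by exact_mod_cast Nat.sub_lt (by omega) one_pos
end
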